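/- arXiv:2209.00885 — 2 statements merged into one kernel-verified Lean document; each statement's English description precedes it below -/
import Mathlib

section
/- Let f : [0,1] → ℝ be a convex function attaining its minimum at a point x* ∈ (0,1). Let 0 ≤ l < c < r < x* with x* − l ≤ 2(r − l). Suppose J_l = [a_l, b_l], J_c = [a_c, b_c], J_r = [a_r, b_r] are compact real intervals with f(l) ∈ J_l, f(c) ∈ J_c, f(r) ∈ J_r, and J_l ∩ J_c ∩ J_r ≠ ∅. Then max{f(l), f(c), f(r)} − f(x*) ≤ 4 · max{b_l − a_l, b_c − a_c, b_r − a_r}. -/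
/-!
On `[l, x*]` a convex function is maximal at `l`, so the largest of the three values is `f l`.
The overlap of `J_l` and `J_r` forces `f l - f r ≤ |J_l| + |J_r|`, and by convexity the drop of
`f` from `l` to `x*` is at most `(x* - l) / (r - l) ≤ 2` times its drop from `l` to `r`.
-/

open Set

theorem sub_le_add_of_mem_Icc_of_inter_nonempty {a b a' b' u v : ℝ} (hu : u ∈ Icc a b)
    (hv : v ∈ Icc a' b') (h : (Icc a b ∩ Icc a' b').Nonempty) :
    u - v ≤ (b - a) + (b' - a') := by
  obtain ⟨t, ⟨hat, -⟩, -, htb'⟩ := h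
  linarith [hu.2, hv.1]

theorem ConvexOn.sub_le_mul_sub_of_sub_le_mul_sub {s : Set ℝ} {f : ℝ → ℝ} (hf : ConvexOn ℝ s f)
    {x y z k : ℝ} (hx : x ∈ s) (hz : z ∈ s) (hxy : x < y) (hyz : y < z) (hfxy : f y ≤ f x)
    (hk : z - x ≤ k * (y - x)) : f x - f z ≤ k * (f x - f y) := by
  have hsecant : (y - x) * (f x - f z) ≤ (z - x) * (f x - f y) := by
    linarith [hf.secant_mono_aux1 hx hz hxy hyz]
  have hscale : (z - x) * (f x - f y) ≤ k * (y - x) * (f x - f y) :=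
    mul_le_mul_of_nonneg_right hk (sub_nonneg.2 hfxy)
  refine le_of_mul_le_mul_left ?_ (sub_pos.2 hxy)
  linarith

theorem claim1_core_general
    (f : ℝ → ℝ) (hf : ConvexOn ℝ (Set.Icc (0 : ℝ) 1) f)
    (xstar : ℝ) (hxstar : xstar ∈ Set.Ioo (0 : ℝ) 1)
    (hmin : ∀ y ∈ Set.Icc (0 : ℝ) 1, f xstar ≤ f y)
    (l c r : ℝ) (hl : 0 ≤ l) (hlc : l < c) (hcr : c < r) (hrx : r < xstar)
    (hclose : xstar - l ≤ 2 * (r - l))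
    (al bl ac bc ar br : ℝ)
    (hfl : f l ∈ Set.Icc al bl)
    (hfr : f r ∈ Set.Icc ar br)
    (hcap : (Set.Icc al bl ∩ Set.Icc ac bc ∩ Set.Icc ar br).Nonempty) :
    max (max (f l) (f c)) (f r) - f xstar ≤
      4 * max (max (bl - al) (bc - ac)) (br - ar) := by
  set M := max (max (bl - al) (bc - ac)) (br - ar)
  have hmem : ∀ y, 0 ≤ y → y ≤ xstar → y ∈ Icc (0 : ℝ) 1 := fun y h0 h1 =>
    ⟨h0, h1.trans hxstar.2.le⟩
  have hL := hmem l hl (by linarith)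
  have hX := hmem xstar (by linarith) le_rfl
  have hle_fl : ∀ y ∈ Icc l xstar, f y ≤ f l := fun y hy =>
    (hf.le_max_of_mem_Icc hL hX hy).trans (max_eq_left (hmin l hL)).le
  have hfr_le : f r ≤ f l := hle_fl r ⟨by linarith, hrx.le⟩
  have hmax : max (max (f l) (f c)) (f r) = f l := by
    rw [max_eq_left (hle_fl c ⟨hlc.le, by linarith⟩), max_eq_left hfr_le]
  have hMl : bl - al ≤ M := (le_max_left _ _).trans (le_max_left _ _)
  have hMr : br - ar ≤ M := le_max_right _ _
  have hdrop : f l - f r ≤ 2 * M := by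
    linarith [sub_le_add_of_mem_Icc_of_inter_nonempty hfl hfr
      (hcap.mono fun _ ht => ⟨ht.1.1, ht.2⟩)]
  have hextra := hf.sub_le_mul_sub_of_sub_le_mul_sub hL hX (hlc.trans hcr) hrx hfr_le hclose
  rw [hmax]
  linarith

/-- Analytic core of Claim 1: if the three fuzzy evaluations of a convex
`f : [0,1] → ℝ` at the query points `l < c < r` (all left of the minimizer
`x*`, with `x* − l ≤ 2(r − l)`) still overlap, then the suboptimality of all
three query points is at most four times the largest fuzziness. -/
theorem claim1_core
    (f : ℝ → ℝ) (hf : ConvexOn ℝ (Set.Icc (0 : ℝ) 1) f)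
    (xstar : ℝ) (hxstar : xstar ∈ Set.Ioo (0 : ℝ) 1)
    (hmin : ∀ y ∈ Set.Icc (0 : ℝ) 1, f xstar ≤ f y)
    (l c r : ℝ) (hl : 0 ≤ l) (hlc : l < c) (hcr : c < r) (hrx : r < xstar)
    (hclose : xstar - l ≤ 2 * (r - l))
    (al bl ac bc ar br : ℝ)
    (hJl : al ≤ bl) (hJc : ac ≤ bc) (hJr : ar ≤ br)
    (hfl : f l ∈ Set.Icc al bl) (hfc : f c ∈ Set.Icc ac bc)
    (hfr : f r ∈ Set.Icc ar br)
    (hcap : (Set.Icc al bl ∩ Set.Icc ac bc ∩ Set.Icc ar br).Nonempty) :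
    max (max (f l) (f c)) (f r) - f xstar ≤
      4 * max (max (bl - al) (bc - ac)) (br - ar) :=
  claim1_core_general f hf xstar hxstar hmin l c r hl hlc hcr hrx hclose al bl ac bc ar br hfl hfr
    hcap
end

section
/- Fix x ∈ (0,1) and an integer m ≥ 1. For n ∈ ℕ let A_n := {k/2^n : k ∈ {1, …, 2^n − 1}} be the dyadic mesh of index n in (0,1). Suppose A_{m−1} ∩ (0, x] contains at least 4 elements (hence so does A_m ∩ (0, x], since A_{m−1} ⊆ A_m). Let p be the 4th largest element of A_m ∩ (0, x] and p' be the 4th largest element of A_{m−1} ∩ (0, x]. Then x − p ≤ (4/7)(x − p'). Symmetrically, if A_{m−1} ∩ [x, 1) contains at least 4 elements, and q, q' denote the 4th smallest elements of A_m ∩ [x, 1) and A_{m−1} ∩ [x, 1) respectively, then q − x ≤ (4/7)(q' − x). -/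
/-- The dyadic mesh of index `n` in `(0,1)`: the points `k / 2^n` for
`k ∈ {1, …, 2^n − 1}`. -/
def dyadicMesh (n : ℕ) : Set ℝ :=
  {y | ∃ k : ℕ, 1 ≤ k ∧ k ≤ 2 ^ n - 1 ∧ y = (k : ℝ) / 2 ^ n}

/-!
With `y = 2^n x`, the mesh points of index `n` in `(0, x]` are `k / 2^n` for
`1 ≤ k ≤ ⌊y⌋`, so the 4th largest one lies at distance `(fract y + 3) / 2^n` from `x`;
at index `n + 1` the distance is `(fract (2y) + 3) / 2^(n+1)`. Since
`fract (2y) ≤ 2 fract y` and `fract (2y) < 1`, we get `7 fract (2y) ≤ 4 · 2 fract y + 3 · 1`,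
which is exactly the ratio `4/7`. The side `[x, 1)` is the same computation for `-x`,
because `⌈y⌉ - y = fract (-y)`.
-/

open Set

namespace StrictMono

variable {α : Type*} [LinearOrder α] {f : ℕ → α}

theorem ncard_image_Icc_inter_Ioi (hf : StrictMono f) {a b j : ℕ} (hj : a ≤ j) :
    (f '' Icc a b ∩ Ioi (f j)).ncard = b - j := by
  have hpre : f ⁻¹' Ioi (f j) = Ioi j := ext fun _ => hf.lt_iff_lt
  have hIoc : Icc a b ∩ Ioi j = Ioc j b := by
    ext k; simp only [mem_inter_iff, mem_Icc, mem_Ioi, mem_Ioc]; omega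
  rw [← image_inter_preimage, hpre, hIoc, ncard_image_of_injective _ hf.injective,
    ← Finset.coe_Ioc, ncard_coe_finset, Nat.card_Ioc]

theorem ncard_image_Icc_inter_Iio (hf : StrictMono f) {a b j : ℕ} (hj : j ≤ b) :
    (f '' Icc a b ∩ Iio (f j)).ncard = j - a := by
  have hpre : f ⁻¹' Iio (f j) = Iio j := ext fun _ => hf.lt_iff_lt
  have hIco : Icc a b ∩ Iio j = Ico a j := by
    ext k; simp only [mem_inter_iff, mem_Icc, mem_Iio, mem_Ico]; omega
  rw [← image_inter_preimage, hpre, hIco, ncard_image_of_injective _ hf.injective,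
    ← Finset.coe_Ico, ncard_coe_finset, Nat.card_Ico]

end StrictMono

theorem strictMono_div_two_pow (n : ℕ) : StrictMono fun k : ℕ => (k : ℝ) / 2 ^ n :=
  fun _ _ h => div_lt_div_of_pos_right (Nat.cast_lt.2 h) (by positivity)

theorem dyadicMesh_inter_Ioc {x : ℝ} (hx : x < 1) (n : ℕ) :
    dyadicMesh n ∩ Ioc 0 x = (fun k : ℕ => (k : ℝ) / 2 ^ n) '' Icc 1 ⌊2 ^ n * x⌋₊ := by
  have h2 : (0 : ℝ) < 2 ^ n := by positivity
  ext y
  simp only [dyadicMesh, mem_inter_iff, mem_ofPred_eq, mem_Ioc, mem_image, mem_Icc]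
  constructor
  · rintro ⟨⟨k, hk1, -, rfl⟩, -, hkx⟩
    refine ⟨k, ⟨hk1, Nat.le_floor ?_⟩, rfl⟩
    rwa [div_le_iff₀' h2] at hkx
  · rintro ⟨k, ⟨hk1, hkx⟩, rfl⟩
    rw [Nat.le_floor_iff' (by omega)] at hkx
    have hk : (k : ℝ) < 2 ^ n := hkx.trans_lt (mul_lt_of_lt_one_right h2 hx)
    refine ⟨⟨k, hk1, ?_, rfl⟩, by positivity, (div_le_iff₀' h2).2 hkx⟩
    have : k < 2 ^ n := by exact_mod_cast hk
    omega

theorem dyadicMesh_inter_Ico {x : ℝ} (hx : 0 < x) (n : ℕ) :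
    dyadicMesh n ∩ Ico x 1 =
      (fun k : ℕ => (k : ℝ) / 2 ^ n) '' Icc ⌈2 ^ n * x⌉₊ (2 ^ n - 1) := by
  have h2 : (0 : ℝ) < 2 ^ n := by positivity
  ext y
  simp only [dyadicMesh, mem_inter_iff, mem_ofPred_eq, mem_Ico, mem_image, mem_Icc]
  constructor
  · rintro ⟨⟨k, -, hk, rfl⟩, hxk, -⟩
    exact ⟨k, ⟨Nat.ceil_le.2 ((le_div_iff₀' h2).1 hxk), hk⟩, rfl⟩
  · rintro ⟨k, ⟨hxk, hk⟩, rfl⟩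
    have hk1 : 1 ≤ k := (Nat.one_le_ceil_iff.2 (by positivity)).trans hxk
    have hk2 : (k : ℝ) < 2 ^ n := by
      have := Nat.one_le_two_pow (n := n)
      exact_mod_cast (show k < 2 ^ n by omega)
    exact ⟨⟨k, hk1, hk, rfl⟩, (le_div_iff₀' h2).2 (Nat.ceil_le.1 hxk),
      (div_lt_one h2).2 hk2⟩

theorem sub_fourth_largest_dyadic_eq {x p : ℝ} (hx₀ : 0 ≤ x) (hx₁ : x < 1) {n : ℕ}
    (hp : p ∈ dyadicMesh n ∩ Ioc 0 x) (hp₃ : (dyadicMesh n ∩ Ioc 0 x ∩ Ioi p).ncard = 3) :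
    x - p = (Int.fract (2 ^ n * x) + 3) / 2 ^ n := by
  rw [dyadicMesh_inter_Ioc hx₁] at hp hp₃
  obtain ⟨j, ⟨hj, -⟩, rfl⟩ := hp
  rw [(strictMono_div_two_pow n).ncard_image_Icc_inter_Ioi hj] at hp₃
  have hfloor : (⌊2 ^ n * x⌋₊ : ℝ) = j + 3 := by
    exact_mod_cast (by omega : ⌊2 ^ n * x⌋₊ = j + 3)
  rw [← Int.self_sub_floor, ← natCast_floor_eq_intCast_floor (by positivity), hfloor]
  field_simp
  ring

theorem fourth_smallest_dyadic_sub_eq {x q : ℝ} (hx : 0 < x) {n : ℕ}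
    (hq : q ∈ dyadicMesh n ∩ Ico x 1) (hq₃ : (dyadicMesh n ∩ Ico x 1 ∩ Iio q).ncard = 3) :
    q - x = (Int.fract (2 ^ n * -x) + 3) / 2 ^ n := by
  rw [dyadicMesh_inter_Ico hx] at hq hq₃
  obtain ⟨j, ⟨-, hj⟩, rfl⟩ := hq
  rw [(strictMono_div_two_pow n).ncard_image_Icc_inter_Iio hj] at hq₃
  have hceil : (⌈2 ^ n * x⌉₊ : ℝ) = j - 3 := by
    rw [eq_sub_iff_add_eq]; exact_mod_cast (by omega : ⌈2 ^ n * x⌉₊ + 3 = j)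
  rw [← Int.self_sub_floor, mul_neg, Int.floor_neg, Int.cast_neg,
    ← natCast_ceil_eq_intCast_ceil (by positivity), hceil]
  field_simp
  ring

theorem seven_mul_fract_two_mul_le (y : ℝ) : 7 * Int.fract (2 * y) ≤ 8 * Int.fract y + 3 := by
  have hfloor : 2 * ⌊y⌋ ≤ ⌊2 * y⌋ :=
    Int.le_floor.2 (by push_cast; linarith [Int.floor_le y])
  have hfract : Int.fract (2 * y) ≤ 2 * Int.fract y := by
    have : (2 * ⌊y⌋ : ℝ) ≤ ⌊2 * y⌋ := by exact_mod_cast hfloor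
    rw [← Int.self_sub_floor, ← Int.self_sub_floor]
    linarith
  linarith [Int.fract_lt_one (2 * y)]

theorem fract_add_three_div_two_pow_succ_le (n : ℕ) (y : ℝ) :
    (Int.fract (2 ^ (n + 1) * y) + 3) / 2 ^ (n + 1) ≤
      4 / 7 * ((Int.fract (2 ^ n * y) + 3) / 2 ^ n) := by
  have key := seven_mul_fract_two_mul_le (2 ^ n * y)
  rw [show (2 : ℝ) ^ (n + 1) * y = 2 * (2 ^ n * y) by ring, pow_succ', ← div_div,
    ← mul_div_assoc]
  exact div_le_div_of_nonneg_right (by linarith) (by positivity)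

/-- The "4th largest element `p` of a set `S`" is encoded by `p ∈ S` together with
`S ∩ (p, ∞)` having exactly 3 elements (symmetrically for "4th smallest"). -/
theorem dyadic_mesh_contraction
    (x : ℝ) (hx : x ∈ Set.Ioo (0 : ℝ) 1) (m : ℕ) (hm : 1 ≤ m) :
    (∀ p p' : ℝ,
      4 ≤ (dyadicMesh (m - 1) ∩ Set.Ioc 0 x).ncard →
      p ∈ dyadicMesh m ∩ Set.Ioc 0 x →
      ((dyadicMesh m ∩ Set.Ioc 0 x) ∩ Set.Ioi p).ncard = 3 →
      p' ∈ dyadicMesh (m - 1) ∩ Set.Ioc 0 x →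
      ((dyadicMesh (m - 1) ∩ Set.Ioc 0 x) ∩ Set.Ioi p').ncard = 3 →
      x - p ≤ 4 / 7 * (x - p')) ∧
    (∀ q q' : ℝ,
      4 ≤ (dyadicMesh (m - 1) ∩ Set.Ico x 1).ncard →
      q ∈ dyadicMesh m ∩ Set.Ico x 1 →
      ((dyadicMesh m ∩ Set.Ico x 1) ∩ Set.Iio q).ncard = 3 →
      q' ∈ dyadicMesh (m - 1) ∩ Set.Ico x 1 →
      ((dyadicMesh (m - 1) ∩ Set.Ico x 1) ∩ Set.Iio q').ncard = 3 →
      q - x ≤ 4 / 7 * (q' - x)) := by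
  obtain ⟨hx₀, hx₁⟩ := hx
  obtain ⟨n, rfl⟩ : ∃ n, m = n + 1 := ⟨m - 1, by omega⟩
  rw [Nat.add_sub_cancel]
  constructor
  · intro p p' _ hp hp₃ hp' hp'₃
    rw [sub_fourth_largest_dyadic_eq hx₀.le hx₁ hp hp₃,
      sub_fourth_largest_dyadic_eq hx₀.le hx₁ hp' hp'₃]
    exact fract_add_three_div_two_pow_succ_le n x
  · intro q q' _ hq hq₃ hq' hq'₃
    rw [fourth_smallest_dyadic_sub_eq hx₀ hq hq₃,
      fourth_smallest_dyadic_sub_eq hx₀ hq' hq'₃]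
    exact fract_add_three_div_two_pow_succ_le n (-x)
end
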